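/- Let P be an n×n positive definite matrix, Ψ = KCP with K = PCᵀ(CPCᵀ + R)⁻¹ for some m×n matrix C and positive definite R. Then for every γ ∈ [0,1], det(P − γΨ) ≤ det(P), i.e., the EKF-BPOD posterior covariance never has larger determinant than the prior. -/

import Mathlib

/-!
With `S = CPCᵀ + R`, the correction `Ψ = (CP)ᵀ S⁻¹ (CP)` is positive semidefinite, and the Joseph
form `P − KCP = (1 − KC) P (1 − KC)ᵀ + KRKᵀ` shows that so is `P − Ψ`. Hence `P − γΨ` decreases
in the Loewner order along `γ ∈ [0, 1]` while staying positive semidefinite, and the determinant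
is monotone there: by the matrix determinant lemma `det (A + LᴴL) = det A · det (1 + L A⁻¹ Lᴴ)`,
and the last factor is at least `1` because the eigenvalues of `1 + M` are at least `1` for `M ⪰ 0`.
-/

open Matrix

namespace Matrix

variable {n : Type*} [Fintype n] [DecidableEq n]

lemma PosSemidef.one_le_det_one_add {M : Matrix n n ℝ} (hM : M.PosSemidef) :
    1 ≤ (1 + M).det := by
  set U := hM.1.eigenvectorUnitary
  have hconj :
      1 + M = Unitary.conjStarAlgAut ℝ _ U (1 + diagonal (RCLike.ofReal ∘ hM.1.eigenvalues)) := by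
    rw [map_add, map_one, ← hM.1.spectral_theorem]
  have hdet : (1 + M).det = ∏ i, (1 + hM.1.eigenvalues i) := by
    rw [hconj, Unitary.conjStarAlgAut_apply, det_mul_comm, ← Matrix.mul_assoc,
      Unitary.coe_star_mul_self, Matrix.one_mul, ← diagonal_one, diagonal_add, det_diagonal]
    rfl
  rw [hdet]
  exact Finset.one_le_prod fun i _ => le_add_of_nonneg_right (hM.eigenvalues_nonneg i)

open scoped MatrixOrder in
lemma PosSemidef.det_le_det_add {A B : Matrix n n ℝ} (hA : A.PosSemidef) (hB : B.PosSemidef) :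
    A.det ≤ (A + B).det := by
  rcases hA.det_nonneg.eq_or_lt with hA0 | hApos
  · exact hA0 ▸ (hA.add hB).det_nonneg
  obtain ⟨L, rfl⟩ := CStarAlgebra.nonneg_iff_eq_star_mul_self.mp hB.nonneg
  have hM : (L * A⁻¹ * star L).PosSemidef := hA.inv.mul_mul_conjTranspose_same L
  calc A.det = A.det * 1 := (mul_one _).symm
    _ ≤ A.det * (1 + L * A⁻¹ * star L).det := by gcongr; exact hM.one_le_det_one_add
    _ = (A + star L * L).det := (det_add_mul _ _ hApos.ne'.isUnit).symm

end Matrix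

section Kalman

variable {n m : Type*} [Fintype n] [Fintype m]

lemma joseph_form [DecidableEq n] {α : Type*} [CommRing α] {P : Matrix n n α} {C : Matrix m n α}
    {R : Matrix m m α} {K : Matrix n m α} (hK : K * (C * P * Cᵀ + R) = P * Cᵀ) :
    P - K * C * P = (1 - K * C) * P * (1 - K * C)ᵀ + K * R * Kᵀ := by
  have hKSK : K * (C * P * Cᵀ + R) * Kᵀ = P * Cᵀ * Kᵀ := by rw [hK]
  simp only [transpose_sub, transpose_one, transpose_mul, Matrix.mul_sub, Matrix.sub_mul,
    Matrix.mul_add, Matrix.add_mul, Matrix.mul_one, Matrix.one_mul, Matrix.mul_assoc] at hKSK ⊢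
  linear_combination (norm := abel) -hKSK

lemma posSemidef_sub_mul_mul [DecidableEq n] {P : Matrix n n ℝ} {C : Matrix m n ℝ}
    {R : Matrix m m ℝ} {K : Matrix n m ℝ} (hP : P.PosSemidef) (hR : R.PosSemidef)
    (hK : K * (C * P * Cᵀ + R) = P * Cᵀ) : (P - K * C * P).PosSemidef := by
  rw [joseph_form hK]
  have h := (hP.mul_mul_conjTranspose_same (1 - K * C)).add (hR.mul_mul_conjTranspose_same K)
  rwa [conjTranspose_eq_transpose_of_trivial, conjTranspose_eq_transpose_of_trivial] at h

lemma posSemidef_mul_mul_inv_mul_mul [DecidableEq m] {P : Matrix n n ℝ} (C : Matrix m n ℝ)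
    {R : Matrix m m ℝ} (hP : P.PosSemidef) (hR : R.PosSemidef) :
    (P * Cᵀ * (C * P * Cᵀ + R)⁻¹ * C * P).PosSemidef := by
  have hS : (C * P * Cᵀ + R).PosSemidef := by
    simpa using (hP.mul_mul_conjTranspose_same C).add hR
  have hPt : Pᵀ = P := by simpa using hP.1.eq
  simpa [hPt, Matrix.mul_assoc] using hS.inv.conjTranspose_mul_mul_same (C * P)

end Kalman

lemma antitoneOn_det_sub_smul {n : Type*} [Fintype n] [DecidableEq n] {P Ψ : Matrix n n ℝ}
    (hΨ : Ψ.PosSemidef) (hPΨ : (P - Ψ).PosSemidef) :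
    AntitoneOn (fun γ : ℝ => (P - γ • Ψ).det) (Set.Iic 1) := by
  intro γ₁ _ γ₂ hγ₂ h
  have hpsd : (P - γ₂ • Ψ).PosSemidef := by
    have h' : P - γ₂ • Ψ = (P - Ψ) + (1 - γ₂) • Ψ := by module
    exact h' ▸ hPΨ.add (hΨ.smul (sub_nonneg.2 hγ₂))
  have h' : P - γ₁ • Ψ = (P - γ₂ • Ψ) + (γ₂ - γ₁) • Ψ := by module
  simpa only [h'] using hpsd.det_le_det_add (hΨ.smul (sub_nonneg.2 h))

/-- For the Kalman gain `K = PCᵀ(CPCᵀ + R)⁻¹`, `Ψ = KCP`, and any BPOD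
`γ ∈ [0,1]`, the EKF-BPOD posterior covariance has determinant no larger than
the prior: `det (P − γΨ) ≤ det P`. -/
theorem bpod_posterior_det_le {n m : ℕ} (P : Matrix (Fin n) (Fin n) ℝ)
    (C : Matrix (Fin m) (Fin n) ℝ) (R : Matrix (Fin m) (Fin m) ℝ)
    (hP : P.PosDef) (hR : R.PosDef)
    (K : Matrix (Fin n) (Fin m) ℝ) (hK : K = P * Cᵀ * (C * P * Cᵀ + R)⁻¹)
    (Ψ : Matrix (Fin n) (Fin n) ℝ) (hΨ : Ψ = K * C * P)
    (γ : ℝ) (h0 : 0 ≤ γ) (h1 : γ ≤ 1) :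
    (P - γ • Ψ).det ≤ P.det := by
  have hS : (C * P * Cᵀ + R).PosDef := by
    simpa using PosDef.posSemidef_add (hP.posSemidef.mul_mul_conjTranspose_same C) hR
  have hKS : K * (C * P * Cᵀ + R) = P * Cᵀ := by
    rw [hK, nonsing_inv_mul_cancel_right _ _ hS.det_pos.ne'.isUnit]
  have hΨpsd : Ψ.PosSemidef :=
    hΨ ▸ hK ▸ posSemidef_mul_mul_inv_mul_mul C hP.posSemidef hR.posSemidef
  have hPΨ : (P - Ψ).PosSemidef := hΨ ▸ posSemidef_sub_mul_mul hP.posSemidef hR.posSemidef hKS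
  simpa using antitoneOn_det_sub_smul hΨpsd hPΨ (by norm_num : (0 : ℝ) ∈ Set.Iic 1) h1 h0
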